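/- For any circuit C of a matroid M and any two distinct elements e, f ∈ C, there is a cocircuit D of M such that C ∩ D = {e, f}. -/

import Mathlib

/-!
`C \ {e}` is independent, so some cocircuit `K` meets it exactly in `f` (the fundamental
cocircuit of `f` in a base containing `C \ {e}`). Then `C ∩ K ⊆ {e, f}`, and `e ∈ K` because a
circuit and a cocircuit never meet in a single element.
-/

open Set

namespace Matroid

variable {α : Type*}

/-- A circuit of a matroid is a minimal dependent set. -/
def Circuit (M : Matroid α) (C : Set α) : Prop :=
  M.Dep C ∧ ∀ D, M.Dep D → D ⊆ C → D = C

/-- A cocircuit is a circuit of the dual matroid. -/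
def Cocircuit (M : Matroid α) (D : Set α) : Prop := M✶.Circuit D

/-- The matroid obtained by deleting the set `D`. -/
def delete' (M : Matroid α) (D : Set α) : Matroid α := M ↾ (M.E \ D)

/-- The matroid obtained by contracting the set `C`. -/
def contract' (M : Matroid α) (C : Set α) : Matroid α := ((M✶).delete' C)✶

/-- `N` is a minor of `M` if it is obtained from `M` by contracting a set `C`
and deleting a set `D`, where `C` and `D` are disjoint subsets of the ground set. -/
def IsMinor' (N M : Matroid α) : Prop :=
  ∃ C D, Disjoint C D ∧ C ∪ D ⊆ M.E ∧ N = (M.contract' C).delete' D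

/-- A scrawl is a union of circuits. -/
def Scrawl (M : Matroid α) (W : Set α) : Prop :=
  ∃ S : Set (Set α), (∀ C ∈ S, M.Circuit C) ∧ W = ⋃₀ S

/-- A matroid is tame if every circuit-cocircuit intersection is finite. -/
def Tame (M : Matroid α) : Prop :=
  ∀ C D, M.Circuit C → M.Cocircuit D → (C ∩ D).Finite

/-- A `k`-painting of a matroid: nonzero coefficients on each circuit and each
cocircuit such that each circuit-cocircuit pair is "orthogonal". -/
def IsPainting {k : Type*} [Field k] (M : Matroid α)
    (c : Set α → α → k) (d : Set α → α → k) : Prop :=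
  (∀ C, M.Circuit C → ∀ e ∈ C, c C e ≠ 0) ∧
  (∀ D, M.Cocircuit D → ∀ e ∈ D, d D e ≠ 0) ∧
  (∀ C D, M.Circuit C → M.Cocircuit D →
    (C ∩ D).Finite ∧ ∑ᶠ e ∈ C ∩ D, c C e * d D e = 0)

end Matroid

namespace Matroid

variable {α : Type*} {M : Matroid α} {C : Set α}

lemma circuit_iff_isCircuit : M.Circuit C ↔ M.IsCircuit C := by
  rw [isCircuit_iff]
  exact and_congr_right fun _ ↦ ⟨fun h D ↦ h D, fun h D ↦ @h D⟩

lemma cocircuit_iff_isCocircuit : M.Cocircuit C ↔ M.IsCocircuit C :=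
  circuit_iff_isCircuit

lemma IsCircuit.exists_isCocircuit_inter_eq_pair (hC : M.IsCircuit C) {e f : α} (he : e ∈ C)
    (hf : f ∈ C) (hef : e ≠ f) : ∃ K, M.IsCocircuit K ∧ C ∩ K = {e, f} := by
  obtain ⟨K, hK, hKC⟩ := (hC.sdiff_singleton_indep he).exists_isCocircuit_inter_eq_mem
    (show f ∈ C \ {e} from ⟨hf, hef.symm⟩)
  have hfK : f ∈ K := (hKC.symm.subset rfl).1
  have hsub : C ∩ K ⊆ {e, f} := fun x ⟨hxC, hxK⟩ ↦ by
    by_cases hxe : x = e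
    · exact .inl hxe
    · exact .inr (hKC.subset ⟨hxK, hxC, hxe⟩)
  have heK : e ∈ K := by
    by_contra heK
    refine hC.inter_isCocircuit_ne_singleton hK (e := f) (subset_antisymm (fun x hx ↦ ?_) ?_)
    · exact (hsub hx).resolve_left fun hxe ↦ heK (hxe ▸ hx.2)
    · exact singleton_subset_iff.2 ⟨hf, hfK⟩
  exact ⟨K, hK, subset_antisymm hsub (insert_subset ⟨he, heK⟩ (singleton_subset_iff.2 ⟨hf, hfK⟩))⟩

end Matroid

/-- For any circuit `C` and distinct `e, f ∈ C` there is a cocircuit meeting `C`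
exactly in `{e, f}`. -/
theorem stmt2 {α : Type*} (M : Matroid α) (C : Set α) (hC : M.Circuit C)
    (e f : α) (he : e ∈ C) (hf : f ∈ C) (hef : e ≠ f) :
    ∃ D, M.Cocircuit D ∧ C ∩ D = {e, f} := by
  obtain ⟨K, hK, hCK⟩ :=
    (Matroid.circuit_iff_isCircuit.1 hC).exists_isCocircuit_inter_eq_pair he hf hef
  exact ⟨K, Matroid.cocircuit_iff_isCocircuit.2 hK, hCK⟩
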